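/- Let d ≥ 2, 1 ≤ i ≤ d, φ : ℝ^d → [0,1] radial, smooth, non-negative, ≢ 0, supported in {4/3 ≤ |ξ| ≤ 3/2}, and set χ(x) = x_i φ̌(x). Then χ is Schwartz with χ(0) = 0, and the function γ defined by γ̂(ξ) = (ξ_i/|ξ|) · i∂_{ξ_i}φ(ξ) (i.e. γ = ℛ_i χ) satisfies γ(0) = −(2π)^{-d/2} ((d−1)/d) ∫_{ℝ^d} φ(ξ)/|ξ| dξ ≠ 0. -/

import Mathlib

open MeasureTheory
open scoped FourierTransform

/-- The (complex-valued) inverse Fourier transform of a real function. -/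
noncomputable def phinv (d : ℕ) (φ : EuclideanSpace ℝ (Fin d) → ℝ) :
    EuclideanSpace ℝ (Fin d) → ℂ :=
  𝓕⁻ (fun ξ => (φ ξ : ℂ))

section Aux

variable {d : ℕ}

/-- Derivative of the norm on Euclidean space away from the origin. -/
lemma stmt12_hasFDerivAt_norm (x : EuclideanSpace ℝ (Fin d)) (hx : x ≠ 0) :
    HasFDerivAt (fun y : EuclideanSpace ℝ (Fin d) => ‖y‖)
      ((1 / (2 * ‖x‖)) • (2 • innerSL ℝ x)) x := by
  have h1 : HasFDerivAt (fun y : EuclideanSpace ℝ (Fin d) => ‖y‖ ^ 2) (2 • innerSL ℝ x) x :=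
    (hasStrictFDerivAt_norm_sq x).hasFDerivAt
  have h2 : HasDerivAt Real.sqrt (1 / (2 * Real.sqrt (‖x‖ ^ 2))) (‖x‖ ^ 2) :=
    Real.hasDerivAt_sqrt (pow_ne_zero 2 (norm_ne_zero_iff.mpr hx))
  have h3 := h2.comp_hasFDerivAt x h1
  rw [Real.sqrt_sq (norm_nonneg x)] at h3
  have heq : (Real.sqrt ∘ fun y : EuclideanSpace ℝ (Fin d) => ‖y‖ ^ 2)
      = fun y : EuclideanSpace ℝ (Fin d) => ‖y‖ := by
    funext y; simp [Real.sqrt_sq (norm_nonneg y)]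
  rwa [heq] at h3

/-- Derivative of `y ↦ y i * ‖y‖⁻¹` away from the origin. -/
lemma stmt12_hasFDerivAt_g (i : Fin d) (x : EuclideanSpace ℝ (Fin d)) (hx : x ≠ 0) :
    HasFDerivAt (fun y : EuclideanSpace ℝ (Fin d) => y i * ‖y‖⁻¹)
      (x i • ((-(‖x‖ ^ 2)⁻¹) • ((1 / (2 * ‖x‖)) • (2 • innerSL ℝ x))) +
        ‖x‖⁻¹ • (EuclideanSpace.proj i : EuclideanSpace ℝ (Fin d) →L[ℝ] ℝ)) x := by
  have hproj : HasFDerivAt (fun y : EuclideanSpace ℝ (Fin d) => y i)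
      (EuclideanSpace.proj i : EuclideanSpace ℝ (Fin d) →L[ℝ] ℝ) x :=
    (EuclideanSpace.proj i : EuclideanSpace ℝ (Fin d) →L[ℝ] ℝ).hasFDerivAt
  have hinvd : HasDerivAt (fun t : ℝ => t⁻¹) (-(‖x‖ ^ 2)⁻¹) ‖x‖ :=
    hasDerivAt_inv (norm_ne_zero_iff.mpr hx)
  have hinv := hinvd.comp_hasFDerivAt x (stmt12_hasFDerivAt_norm x hx)
  have heq : ((fun t : ℝ => t⁻¹) ∘ fun y : EuclideanSpace ℝ (Fin d) => ‖y‖)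
      = fun y : EuclideanSpace ℝ (Fin d) => ‖y‖⁻¹ := rfl
  rw [heq] at hinv
  exact hproj.mul hinv

lemma stmt12_fderiv_g_val (i : Fin d) (x : EuclideanSpace ℝ (Fin d)) (hx : x ≠ 0) :
    fderiv ℝ (fun y : EuclideanSpace ℝ (Fin d) => y i * ‖y‖⁻¹) x (EuclideanSpace.single i 1)
      = ‖x‖⁻¹ - (x i) ^ 2 * (‖x‖⁻¹) ^ 3 := by
  rw [(stmt12_hasFDerivAt_g i x hx).fderiv]
  have hn : ‖x‖ ≠ 0 := norm_ne_zero_iff.mpr hx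
  have h1 : (innerSL ℝ x) (EuclideanSpace.single i 1) = x i := by simp [EuclideanSpace.inner_single_right]
  have h2 : (EuclideanSpace.proj i : EuclideanSpace ℝ (Fin d) →L[ℝ] ℝ)
      (EuclideanSpace.single i 1) = 1 := by simp
  simp only [ContinuousLinearMap.add_apply, ContinuousLinearMap.smul_apply,
    ContinuousLinearMap.coe_smul', Pi.smul_apply, h1, h2, smul_eq_mul]
  field_simp
  ring

/-- Integrability of products `q * ρ` where `ρ` is continuous supported in the annulus and `q`
is continuous away from `0`. -/
lemma stmt12_integrable_aux (q ρ : EuclideanSpace ℝ (Fin d) → ℝ)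
    (hq : ∀ x, x ≠ 0 → ContinuousAt q x)
    (hρ : Continuous ρ)
    (hρ0 : ∀ x, ‖x‖ < (4 / 3 : ℝ) → ρ x = 0)
    (hρs : ∀ x, (3 / 2 : ℝ) < ‖x‖ → ρ x = 0) :
    Integrable (fun x => q x * ρ x) (volume : Measure (EuclideanSpace ℝ (Fin d))) := by
  have hcont : Continuous fun x => q x * ρ x := by
    rw [continuous_iff_continuousAt]
    intro x
    rcases lt_or_ge ‖x‖ (4 / 3) with h | h
    · have hop : IsOpen {y : EuclideanSpace ℝ (Fin d) | ‖y‖ < 4 / 3} :=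
        isOpen_lt continuous_norm continuous_const
      have hev : (fun y => q y * ρ y) =ᶠ[nhds x] fun _ => (0 : ℝ) :=
        Filter.eventually_of_mem (hop.mem_nhds h) fun y hy => by simp [hρ0 y hy]
      exact (continuousAt_congr hev).2 continuousAt_const
    · have hx : x ≠ 0 := by
        intro h0
        rw [h0, norm_zero] at h; norm_num at h
      exact (hq x hx).mul hρ.continuousAt
  have hcs : HasCompactSupport fun x => q x * ρ x := by
    apply HasCompactSupport.intro (isCompact_closedBall (0 : EuclideanSpace ℝ (Fin d)) (3 / 2))
    intro x hx
    have : (3 / 2 : ℝ) < ‖x‖ := by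
      simpa [Metric.mem_closedBall, dist_zero_right, not_le] using hx
    simp [hρs x this]
  exact hcont.integrable_of_hasCompactSupport hcs

end Aux

/-- for `d ≥ 2` and radial, smooth, non-negative `φ` supported in the
annulus, not identically zero, the function `χ(x) = x_i φ̌(x)` vanishes at `0`, and
`(2π)^{-d/2} ∫ (ξ_i/|ξ|) ∂_{ξ_i}φ dξ = −(2π)^{-d/2}((d−1)/d) ∫ φ/|ξ| dξ ≠ 0`
(the value `γ(0)` of `γ = ℛ_i χ`). -/
theorem stmt12 (d : ℕ) (hd : 2 ≤ d) (i : Fin d)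
    (φ : EuclideanSpace ℝ (Fin d) → ℝ)
    (hsm : ContDiff ℝ (⊤ : ℕ∞) φ)
    (hrange : ∀ ξ, φ ξ ∈ Set.Icc (0 : ℝ) 1)
    (hradial : ∀ ξ η : EuclideanSpace ℝ (Fin d), ‖ξ‖ = ‖η‖ → φ ξ = φ η)
    (hsupp : ∀ ξ, φ ξ ≠ 0 → 4 / 3 ≤ ‖ξ‖ ∧ ‖ξ‖ ≤ 3 / 2)
    (hne : φ ≠ 0) :
    (fun x : EuclideanSpace ℝ (Fin d) => (x i : ℂ) * phinv d φ x) 0 = 0 ∧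
    (2 * Real.pi) ^ (-(d : ℝ) / 2) *
        ∫ ξ : EuclideanSpace ℝ (Fin d),
          (ξ i / ‖ξ‖) * fderiv ℝ φ ξ (EuclideanSpace.single i 1)
      = -((2 * Real.pi) ^ (-(d : ℝ) / 2) * (((d : ℝ) - 1) / d) *
          ∫ ξ : EuclideanSpace ℝ (Fin d), φ ξ / ‖ξ‖) ∧
    (2 * Real.pi) ^ (-(d : ℝ) / 2) * (((d : ℝ) - 1) / d) *
        ∫ ξ : EuclideanSpace ℝ (Fin d), φ ξ / ‖ξ‖ ≠ 0 := by
  classical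
  set v : EuclideanSpace ℝ (Fin d) := EuclideanSpace.single i 1 with hv
  -- basic facts about φ
  have h43 : ∀ x : EuclideanSpace ℝ (Fin d), ‖x‖ < 4 / 3 → φ x = 0 := by
    intro x h
    by_contra hc
    exact absurd (hsupp x hc).1 (not_le.2 h)
  have h32 : ∀ x : EuclideanSpace ℝ (Fin d), (3 / 2 : ℝ) < ‖x‖ → φ x = 0 := by
    intro x h
    by_contra hc
    exact absurd (hsupp x hc).2 (not_le.2 h)
  have hts : tsupport φ ⊆ {x : EuclideanSpace ℝ (Fin d) | 4 / 3 ≤ ‖x‖ ∧ ‖x‖ ≤ 3 / 2} := by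
    apply closure_minimal
    · intro x hx; exact hsupp x hx
    · exact (isClosed_le continuous_const continuous_norm).inter
        (isClosed_le continuous_norm continuous_const)
  have hdφ0 : ∀ x : EuclideanSpace ℝ (Fin d), ‖x‖ < 4 / 3 → fderiv ℝ φ x = 0 := by
    intro x h
    by_contra hc
    have : x ∈ tsupport φ := support_fderiv_subset ℝ (Function.mem_support.2 hc)
    exact absurd (hts this).1 (not_le.2 h)
  have hdφ32 : ∀ x : EuclideanSpace ℝ (Fin d), (3 / 2 : ℝ) < ‖x‖ → fderiv ℝ φ x = 0 := by
    intro x h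
    by_contra hc
    have : x ∈ tsupport φ := support_fderiv_subset ℝ (Function.mem_support.2 hc)
    exact absurd (hts this).2 (not_le.2 h)
  -- the bump function and the globally defined multiplier f
  set b : ContDiffBump (0 : EuclideanSpace ℝ (Fin d)) := ⟨1, 5 / 4, one_pos, by norm_num⟩ with hb
  set f : EuclideanSpace ℝ (Fin d) → ℝ := fun x => (1 - b x) * (x i * ‖x‖⁻¹) with hf
  have hbc : ContDiff ℝ 1 (⇑b) := b.contDiff
  have hbone : ∀ x : EuclideanSpace ℝ (Fin d), ‖x‖ ≤ 1 → b x = 1 := by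
    intro x h
    apply b.one_of_mem_closedBall
    simp only [Metric.mem_closedBall, dist_zero_right]
    exact h
  have hbzero : ∀ x : EuclideanSpace ℝ (Fin d), (5 / 4 : ℝ) ≤ ‖x‖ → b x = 0 := by
    intro x h
    apply b.zero_of_le_dist
    rw [dist_zero_right]
    exact h
  have hfg_ev : ∀ x : EuclideanSpace ℝ (Fin d), (5 / 4 : ℝ) < ‖x‖ →
      f =ᶠ[nhds x] fun y : EuclideanSpace ℝ (Fin d) => y i * ‖y‖⁻¹ := by
    intro x hx
    have hop : IsOpen {y : EuclideanSpace ℝ (Fin d) | (5 / 4 : ℝ) < ‖y‖} :=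
      isOpen_lt continuous_const continuous_norm
    exact Filter.eventually_of_mem (hop.mem_nhds hx) fun y hy => by
      simp [hf, hbzero y (le_of_lt hy)]
  have hdiff_f : Differentiable ℝ f := by
    intro x
    rcases eq_or_ne x 0 with rfl | hx
    · have hev : f =ᶠ[nhds (0 : EuclideanSpace ℝ (Fin d))] fun _ => (0 : ℝ) := by
        refine Filter.eventually_of_mem
          (Metric.ball_mem_nhds (0 : EuclideanSpace ℝ (Fin d)) one_pos) fun y hy => ?_
        have : ‖y‖ ≤ 1 := le_of_lt (by simpa [dist_zero_right] using hy)
        simp [hf, hbone y this]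
      have h0 : DifferentiableAt ℝ (fun _ : EuclideanSpace ℝ (Fin d) => (0 : ℝ)) 0 :=
        differentiableAt_const 0
      exact (Filter.EventuallyEq.differentiableAt_iff hev).2 h0
    · have h1 : DifferentiableAt ℝ (fun y : EuclideanSpace ℝ (Fin d) => 1 - b y) x :=
        (differentiableAt_const 1).sub ((hbc.differentiable one_ne_zero).differentiableAt)
      have h2 : DifferentiableAt ℝ (fun y : EuclideanSpace ℝ (Fin d) => y i) x :=
        (EuclideanSpace.proj i : EuclideanSpace ℝ (Fin d) →L[ℝ] ℝ).differentiable.differentiableAt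
      have h3 : DifferentiableAt ℝ (fun y : EuclideanSpace ℝ (Fin d) => ‖y‖⁻¹) x := by
        have hnx : ‖x‖ ≠ 0 := norm_ne_zero_iff.mpr hx
        exact ((contDiffAt_norm ℝ hx : ContDiffAt ℝ 1 (fun y : EuclideanSpace ℝ (Fin d) => ‖y‖) x).differentiableAt one_ne_zero).inv hnx
      exact h1.mul (h2.mul h3)
  have hdiff_φ : Differentiable ℝ φ := hsm.differentiable (by simp)
  -- continuity facts
  have hφc : Continuous φ := hsm.continuous
  have hdφvc : Continuous fun x : EuclideanSpace ℝ (Fin d) => fderiv ℝ φ x v :=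
    (hsm.continuous_fderiv (by simp)).clm_apply continuous_const
  have hdφv0 : ∀ x : EuclideanSpace ℝ (Fin d), ‖x‖ < 4 / 3 → fderiv ℝ φ x v = 0 := fun x h => by
    rw [hdφ0 x h]; simp
  have hdφv32 : ∀ x : EuclideanSpace ℝ (Fin d), (3 / 2 : ℝ) < ‖x‖ → fderiv ℝ φ x v = 0 :=
    fun x h => by rw [hdφ32 x h]; simp
  -- continuity of f away from 0
  have hqnorm : ∀ x : EuclideanSpace ℝ (Fin d), x ≠ 0 →
      ContinuousAt (fun y : EuclideanSpace ℝ (Fin d) => ‖y‖⁻¹) x := fun x hx =>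
    continuous_norm.continuousAt.inv₀ (norm_ne_zero_iff.mpr hx)
  have hfca : ∀ x : EuclideanSpace ℝ (Fin d), x ≠ 0 → ContinuousAt f x := by
    intro x hx
    exact ((continuous_const.sub hbc.continuous).continuousAt).mul
      (((EuclideanSpace.proj i : EuclideanSpace ℝ (Fin d) →L[ℝ] ℝ).continuous.continuousAt).mul
        (hqnorm x hx))
  -- f is C¹ away from 0, so fderiv f is continuous away from 0
  have hfC1 : ContDiffOn ℝ 1 f {x : EuclideanSpace ℝ (Fin d) | x ≠ 0} := by
    intro x hx
    have hx' : x ≠ 0 := hx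
    have h1 : ContDiffAt ℝ 1 (fun y : EuclideanSpace ℝ (Fin d) => 1 - b y) x :=
      (contDiff_const.sub hbc).contDiffAt
    have h2 : ContDiffAt ℝ 1 (fun y : EuclideanSpace ℝ (Fin d) => y i) x :=
      ((EuclideanSpace.proj i : EuclideanSpace ℝ (Fin d) →L[ℝ] ℝ).contDiff).contDiffAt
    have h3 : ContDiffAt ℝ 1 (fun y : EuclideanSpace ℝ (Fin d) => ‖y‖⁻¹) x :=
      (contDiffAt_norm ℝ hx').inv (norm_ne_zero_iff.mpr hx')
    exact (h1.mul (h2.mul h3)).contDiffWithinAt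
  have hfderivc : ∀ x : EuclideanSpace ℝ (Fin d), x ≠ 0 →
      ContinuousAt (fun y : EuclideanSpace ℝ (Fin d) => fderiv ℝ f y v) x := by
    intro x hx
    have hopen : IsOpen {x : EuclideanSpace ℝ (Fin d) | x ≠ 0} := isOpen_compl_singleton
    have hco := hfC1.continuousOn_fderiv_of_isOpen hopen le_rfl
    have hca : ContinuousAt (fderiv ℝ f) x := hco.continuousAt (hopen.mem_nhds hx)
    exact ((ContinuousLinearMap.apply ℝ ℝ v).continuous.continuousAt).comp hca
  -- integrability facts
  have hint1 : Integrable (fun x : EuclideanSpace ℝ (Fin d) => f x * fderiv ℝ φ x v) volume :=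
    stmt12_integrable_aux f (fun x => fderiv ℝ φ x v) hfca hdφvc hdφv0 hdφv32
  have hint2 : Integrable (fun x : EuclideanSpace ℝ (Fin d) => fderiv ℝ f x v * φ x) volume :=
    stmt12_integrable_aux _ φ hfderivc hφc h43 h32
  have hint3 : Integrable (fun x : EuclideanSpace ℝ (Fin d) => f x * φ x) volume :=
    stmt12_integrable_aux f φ hfca hφc h43 h32
  have hint4 : Integrable (fun x : EuclideanSpace ℝ (Fin d) => ‖x‖⁻¹ * φ x) volume :=
    stmt12_integrable_aux _ φ hqnorm hφc h43 h32
  have hqj : ∀ j : Fin d, ∀ x : EuclideanSpace ℝ (Fin d), x ≠ 0 →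
      ContinuousAt (fun y : EuclideanSpace ℝ (Fin d) => (y j) ^ 2 * (‖y‖⁻¹) ^ 3) x := by
    intro j x hx
    exact (((EuclideanSpace.proj j : EuclideanSpace ℝ (Fin d) →L[ℝ] ℝ).continuous.continuousAt).pow
      2).mul ((hqnorm x hx).pow 3)
  have hint5 : ∀ j : Fin d,
      Integrable (fun x : EuclideanSpace ℝ (Fin d) => (x j) ^ 2 * (‖x‖⁻¹) ^ 3 * φ x) volume :=
    fun j => stmt12_integrable_aux _ φ (hqj j) hφc h43 h32
  -- integration by parts
  have hibp : ∫ x : EuclideanSpace ℝ (Fin d), f x * fderiv ℝ φ x v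
      = -∫ x : EuclideanSpace ℝ (Fin d), fderiv ℝ f x v * φ x :=
    integral_mul_fderiv_eq_neg_fderiv_mul_of_integrable hint2 hint1 hint3 (fun x _ => hdiff_f x) (fun x _ => hdiff_φ x)
  -- identify the left side with the statement integrand
  have heq1 : (fun x : EuclideanSpace ℝ (Fin d) => (x i / ‖x‖) * fderiv ℝ φ x v)
      = fun x : EuclideanSpace ℝ (Fin d) => f x * fderiv ℝ φ x v := by
    funext x
    rcases eq_or_ne (fderiv ℝ φ x v) 0 with h | h
    · simp [h]
    · have hxt : x ∈ tsupport φ := by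
        apply support_fderiv_subset ℝ (Function.mem_support.2 _)
        intro hc; rw [hc] at h; exact h (by simp)
      have h43x : (4 / 3 : ℝ) ≤ ‖x‖ := (hts hxt).1
      have hb0 : b x = 0 := hbzero x (by linarith)
      have hfx : f x = x i * ‖x‖⁻¹ := by simp [hf, hb0]
      rw [hfx, div_eq_mul_inv]
  -- identify the right side integrand
  have heq2 : (fun x : EuclideanSpace ℝ (Fin d) => fderiv ℝ f x v * φ x)
      = fun x : EuclideanSpace ℝ (Fin d) => (‖x‖⁻¹ - (x i) ^ 2 * (‖x‖⁻¹) ^ 3) * φ x := by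
    funext x
    rcases eq_or_ne (φ x) 0 with h | h
    · simp [h]
    · have h43x : (4 / 3 : ℝ) ≤ ‖x‖ := (hsupp x h).1
      have hx : x ≠ 0 := by
        intro h0; rw [h0, norm_zero] at h43x; norm_num at h43x
      have hev := hfg_ev x (by linarith)
      rw [hv, hev.fderiv_eq, stmt12_fderiv_g_val i x hx]
  -- radial symmetry: all the coordinate integrals agree
  have hswap : ∀ j : Fin d,
      (∫ x : EuclideanSpace ℝ (Fin d), (x j) ^ 2 * (‖x‖⁻¹) ^ 3 * φ x)
        = ∫ x : EuclideanSpace ℝ (Fin d), (x i) ^ 2 * (‖x‖⁻¹) ^ 3 * φ x := by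
    intro j
    set e : EuclideanSpace ℝ (Fin d) ≃ₗᵢ[ℝ] EuclideanSpace ℝ (Fin d) :=
      LinearIsometryEquiv.piLpCongrLeft 2 ℝ ℝ (Equiv.swap j i) with he
    have hmp : MeasurePreserving (⇑e) volume volume := e.measurePreserving
    have hme : MeasurableEmbedding (⇑e) := e.toHomeomorph.measurableEmbedding
    have hic := hmp.integral_comp hme
      (fun x : EuclideanSpace ℝ (Fin d) => (x j) ^ 2 * (‖x‖⁻¹) ^ 3 * φ x)
    rw [← hic]
    congr 1
    funext y
    have hnorm : ‖e y‖ = ‖y‖ := e.norm_map y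
    have happ : (e y) j = y i := by
      rw [he]
      simp only [LinearIsometryEquiv.piLpCongrLeft_apply, Equiv.piCongrLeft'_apply,
        Equiv.symm_swap]
      rw [Equiv.swap_apply_left]
    rw [happ, hnorm, hradial (e y) y hnorm]
  -- summing up
  have hsum : (∫ x : EuclideanSpace ℝ (Fin d), ‖x‖⁻¹ * φ x)
      = (d : ℝ) * ∫ x : EuclideanSpace ℝ (Fin d), (x i) ^ 2 * (‖x‖⁻¹) ^ 3 * φ x := by
    have hptwise : (fun x : EuclideanSpace ℝ (Fin d) => ‖x‖⁻¹ * φ x)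
        = fun x : EuclideanSpace ℝ (Fin d) => ∑ j : Fin d, (x j) ^ 2 * (‖x‖⁻¹) ^ 3 * φ x := by
      funext x
      rcases eq_or_ne x 0 with rfl | hx
      · have hφ0 : φ (0 : EuclideanSpace ℝ (Fin d)) = 0 := h43 0 (by rw [norm_zero]; norm_num)
        simp [hφ0]
      · have hn : ‖x‖ ≠ 0 := norm_ne_zero_iff.mpr hx
        have hsq : ∑ j : Fin d, (x j) ^ 2 = ‖x‖ ^ 2 := by
          rw [EuclideanSpace.norm_eq, Real.sq_sqrt (by positivity)]
          simp [Real.norm_eq_abs, sq_abs]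
        rw [← Finset.sum_mul, ← Finset.sum_mul, hsq]
        have hxx : ‖x‖ ^ 2 * (‖x‖⁻¹) ^ 3 = ‖x‖⁻¹ := by field_simp
        rw [hxx]
    rw [hptwise, integral_finset_sum _ fun j _ => hint5 j]
    rw [Finset.sum_congr rfl fun j _ => hswap j, Finset.sum_const, Finset.card_univ,
      Fintype.card_fin, nsmul_eq_mul]
  have hdp : (0 : ℝ) < d := by positivity
  have hdne : (d : ℝ) ≠ 0 := ne_of_gt hdp
  -- the main integral identity
  have hmain : (∫ x : EuclideanSpace ℝ (Fin d), (x i / ‖x‖) * fderiv ℝ φ x v)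
      = -(((d : ℝ) - 1) / d * ∫ x : EuclideanSpace ℝ (Fin d), ‖x‖⁻¹ * φ x) := by
    rw [heq1, hibp, heq2]
    have hsub : (fun x : EuclideanSpace ℝ (Fin d) => (‖x‖⁻¹ - (x i) ^ 2 * (‖x‖⁻¹) ^ 3) * φ x)
        = fun x : EuclideanSpace ℝ (Fin d) =>
            ‖x‖⁻¹ * φ x - (x i) ^ 2 * (‖x‖⁻¹) ^ 3 * φ x := by
      funext x; ring
    rw [hsub, integral_sub hint4 (hint5 i)]
    have hIi : (∫ x : EuclideanSpace ℝ (Fin d), (x i) ^ 2 * (‖x‖⁻¹) ^ 3 * φ x)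
        = (1 / (d : ℝ)) * ∫ x : EuclideanSpace ℝ (Fin d), ‖x‖⁻¹ * φ x := by
      rw [hsum]; field_simp
    rw [hIi]; field_simp
  -- positivity of the φ integral
  have hP : 0 < ∫ x : EuclideanSpace ℝ (Fin d), ‖x‖⁻¹ * φ x := by
    rw [integral_pos_iff_support_of_nonneg_ae ?_ hint4]
    · obtain ⟨x0, hx0⟩ : ∃ x : EuclideanSpace ℝ (Fin d), φ x ≠ 0 := by
        by_contra hc
        push_neg at hc
        exact hne (funext hc)
      have h43x : (4 / 3 : ℝ) ≤ ‖x0‖ := (hsupp x0 hx0).1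
      have hφpos : 0 < φ x0 := lt_of_le_of_ne (hrange x0).1 (Ne.symm hx0)
      have hcont : Continuous fun x : EuclideanSpace ℝ (Fin d) => ‖x‖⁻¹ * φ x := by
        rw [continuous_iff_continuousAt]
        intro x
        rcases lt_or_ge ‖x‖ (4 / 3) with h | h
        · have hop : IsOpen {y : EuclideanSpace ℝ (Fin d) | ‖y‖ < 4 / 3} :=
            isOpen_lt continuous_norm continuous_const
          have hev : (fun y : EuclideanSpace ℝ (Fin d) => ‖y‖⁻¹ * φ y) =ᶠ[nhds x]
              fun _ => (0 : ℝ) :=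
            Filter.eventually_of_mem (hop.mem_nhds h) fun y hy => by simp [h43 y hy]
          exact (continuousAt_congr hev).2 continuousAt_const
        · have hx : x ≠ 0 := by
            intro h0; rw [h0, norm_zero] at h; norm_num at h
          exact (hqnorm x hx).mul hφc.continuousAt
      have hvalpos : 0 < ‖x0‖⁻¹ * φ x0 := by
        have hn0 : (0 : ℝ) < ‖x0‖ := by linarith
        positivity
      have hopen : IsOpen {x : EuclideanSpace ℝ (Fin d) | 0 < ‖x‖⁻¹ * φ x} :=
        isOpen_lt continuous_const hcont
      calc (0 : ENNReal) < volume {x : EuclideanSpace ℝ (Fin d) | 0 < ‖x‖⁻¹ * φ x} :=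
            hopen.measure_pos volume ⟨x0, hvalpos⟩
        _ ≤ volume (Function.support fun x : EuclideanSpace ℝ (Fin d) => ‖x‖⁻¹ * φ x) :=
            measure_mono fun x hx => ne_of_gt hx
    · refine Filter.Eventually.of_forall fun x => ?_
      have h1 : (0 : ℝ) ≤ φ x := (hrange x).1
      positivity
  have hPint : (∫ x : EuclideanSpace ℝ (Fin d), φ x / ‖x‖)
      = ∫ x : EuclideanSpace ℝ (Fin d), ‖x‖⁻¹ * φ x := by
    congr 1; funext x; rw [div_eq_mul_inv, mul_comm]
  have hfrac : (0 : ℝ) < ((d : ℝ) - 1) / d := by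
    have h2d : (2 : ℝ) ≤ d := by exact_mod_cast hd
    apply div_pos <;> linarith
  have hcpos : (0 : ℝ) < (2 * Real.pi) ^ (-(d : ℝ) / 2) :=
    Real.rpow_pos_of_pos (by positivity) _
  refine ⟨?_, ?_, ?_⟩
  · simp
  · rw [hPint, hmain]
    ring
  · rw [hPint]
    exact ne_of_gt (by positivity)
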